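/- There exist no three-player impartial games X and Y such that X and Y are both N-games and X + Y is a P-game. -/
import Mathlib


/-- Three-player impartial games: well-founded game trees. -/
inductive G3 : Type 1 where
  | mk : (ι : Type) → (ι → G3) → G3

namespace G3

/-- The index type of options (moves) of a game. -/
def moves : G3 → Type
  | mk ι _ => ι

/-- The option of a game corresponding to a move. -/
def moveFn : (g : G3) → moves g → G3
  | mk _ f => f

/-- Disjunctive sum: move in exactly one component. -/
noncomputable def add : G3 → G3 → G3 :=
  G3.rec (fun ι f ihf =>
    G3.rec (fun κ g ihg =>
      mk (ι ⊕ κ) (fun x =>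
        match x with
        | Sum.inl i => ihf i (mk κ g)
        | Sum.inr j => ihg j)))

/-- The four outcome types of a three-player impartial game. -/
inductive PType : Type
  | N | O | P | Q
deriving DecidableEq

open Classical in
/-- The type of a game: `N` iff some option is a `P`-game; `O` iff it has at least
one option and all options are `N`-games; `P` iff all options are `O`-games;
`Q` otherwise. -/
noncomputable def typ : G3 → PType
  | mk ι f =>
    if ∃ i, typ (f i) = PType.P then PType.N
    else if Nonempty ι ∧ ∀ i, typ (f i) = PType.N then PType.O
    else if ∀ i, typ (f i) = PType.O then PType.P
    else PType.Q

/-- The Nim heap of size `n`: options are heaps of sizes `0, …, n-1`. -/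
def nim : ℕ → G3
  | n => mk (Fin n) (fun i => nim i)
termination_by n => n
decreasing_by exact i.isLt

/-- The sum of `n` Nim heaps of size 1. -/
noncomputable def ones : ℕ → G3
  | 0 => nim 0
  | n + 1 => add (ones n) (nim 1)

lemma add_mk (ι κ : Type) (f : ι → G3) (g : κ → G3) :
    add (mk ι f) (mk κ g) = mk (ι ⊕ κ) (fun x =>
      match x with
      | Sum.inl i => add (f i) (mk κ g)
      | Sum.inr j => add (mk ι f) (g j)) := rfl

open Classical in
lemma typ_mk (ι : Type) (f : ι → G3) :
    typ (mk ι f) =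
      if ∃ i, typ (f i) = PType.P then PType.N
      else if Nonempty ι ∧ ∀ i, typ (f i) = PType.N then PType.O
      else if ∀ i, typ (f i) = PType.O then PType.P
      else PType.Q := by
  rw [typ]

lemma exists_P_of_N {ι : Type} {f : ι → G3} (h : typ (mk ι f) = PType.N) :
    ∃ i, typ (f i) = PType.P := by
  rw [typ_mk] at h; split_ifs at h with h1 h2 h3 <;> simp_all

lemma all_N_of_O {ι : Type} {f : ι → G3} (h : typ (mk ι f) = PType.O) :
    Nonempty ι ∧ ∀ i, typ (f i) = PType.N := by
  rw [typ_mk] at h; split_ifs at h with h1 h2 h3 <;> simp_all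

lemma all_O_of_P {ι : Type} {f : ι → G3} (h : typ (mk ι f) = PType.P) :
    ∀ i, typ (f i) = PType.O := by
  rw [typ_mk] at h; split_ifs at h with h1 h2 h3 <;> simp_all

theorem key : ∀ X Y : G3,
    ¬(typ X = PType.N ∧ typ Y = PType.N ∧ typ (add X Y) = PType.P) ∧
    ¬(typ X = PType.P ∧ typ Y = PType.N ∧ typ (add X Y) = PType.O) ∧
    ¬(typ X = PType.N ∧ typ Y = PType.P ∧ typ (add X Y) = PType.O) ∧
    ¬(typ X = PType.P ∧ typ Y = PType.P ∧ typ (add X Y) = PType.N) ∧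
    ¬(typ X = PType.O ∧ typ Y = PType.P ∧ typ (add X Y) = PType.P) ∧
    ¬(typ X = PType.P ∧ typ Y = PType.O ∧ typ (add X Y) = PType.P) := by
  intro X
  induction X with
  | mk ι f ihX =>
    intro Y
    induction Y with
    | mk κ g ihY =>
      rw [add_mk]
      refine ⟨?_, ?_, ?_, ?_, ?_, ?_⟩
      · rintro ⟨hX, hY, hS⟩
        obtain ⟨i, hi⟩ := exists_P_of_N hX
        exact (ihX i (mk κ g)).2.1 ⟨hi, hY, all_O_of_P hS (Sum.inl i)⟩
      · rintro ⟨hX, hY, hS⟩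
        obtain ⟨j, hj⟩ := exists_P_of_N hY
        exact (ihY j).2.2.2.1 ⟨hX, hj, (all_N_of_O hS).2 (Sum.inr j)⟩
      · rintro ⟨hX, hY, hS⟩
        obtain ⟨i, hi⟩ := exists_P_of_N hX
        exact (ihX i (mk κ g)).2.2.2.1 ⟨hi, hY, (all_N_of_O hS).2 (Sum.inl i)⟩
      · rintro ⟨hX, hY, hS⟩
        obtain ⟨x, hx⟩ := exists_P_of_N hS
        cases x with
        | inl i =>
          exact (ihX i (mk κ g)).2.2.2.2.1 ⟨all_O_of_P hX i, hY, hx⟩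
        | inr j =>
          exact (ihY j).2.2.2.2.2 ⟨hX, all_O_of_P hY j, hx⟩
      · rintro ⟨hX, hY, hS⟩
        obtain ⟨⟨i⟩, hN⟩ := all_N_of_O hX
        exact (ihX i (mk κ g)).2.2.1 ⟨hN i, hY, all_O_of_P hS (Sum.inl i)⟩
      · rintro ⟨hX, hY, hS⟩
        obtain ⟨⟨j⟩, hN⟩ := all_N_of_O hY
        exact (ihY j).2.1 ⟨hX, hN j, all_O_of_P hS (Sum.inr j)⟩

theorem no_N_plus_N_eq_P :
    ¬ ∃ X Y : G3, typ X = PType.N ∧ typ Y = PType.N ∧ typ (add X Y) = PType.P := by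
  rintro ⟨X, Y, h1, h2, h3⟩
  exact (key X Y).1 ⟨h1, h2, h3⟩

end G3
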